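/- If {π_n} is a dense sequence of partitions of [0,1], then there exists a sequence of partitions {σ_n} with σ_n a permutation of π_n for every n such that {σ_n} is uniformly distributed. -/

import Mathlib

open MeasureTheory Filter

/-- A partition of `[0,1]` into `k` closed intervals, determined by points
`0 = t 0 < t 1 < ⋯ < t k = 1`. -/
structure UnitIntervalPartition where
  k : ℕ
  k_pos : 0 < k
  t : ℕ → ℝ
  t_zero : t 0 = 0
  t_last : t k = 1
  mono : ∀ i < k, t i < t (i + 1)

namespace UnitIntervalPartition

/-- The length of the `i`-th interval (`0`-indexed). -/
def length (π : UnitIntervalPartition) (i : ℕ) : ℝ := π.t (i + 1) - π.t i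

/-- The diameter of a partition: the maximal length of its intervals. -/
noncomputable def diam (π : UnitIntervalPartition) : ℝ :=
  (Finset.range π.k).sup' (Finset.nonempty_range_iff.mpr π.k_pos.ne') π.length

end UnitIntervalPartition

/-- A sequence of partitions is uniformly distributed if for every continuous `f` on `[0,1]`,
`(1/k(n)) ∑_{i=1}^{k(n)} f(tᵢⁿ) → ∫₀¹ f`. -/
def IsUD (π : ℕ → UnitIntervalPartition) : Prop :=
  ∀ f : ℝ → ℝ, ContinuousOn f (Set.Icc 0 1) →
    Tendsto (fun n => (∑ i ∈ Finset.range (π n).k, f ((π n).t (i + 1))) / ((π n).k : ℝ))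
      atTop (nhds (∫ x in (0:ℝ)..1, f x))

/-- `π'` is a permutation of `π`: it has the same number of intervals, and its list of
interval lengths is a rearrangement of that of `π`. -/
def IsPermutationOf (π' π : UnitIntervalPartition) : Prop :=
  π'.k = π.k ∧ ∃ e : Equiv.Perm (Fin π.k), ∀ i : Fin π.k, π'.length i = π.length (e i)

/-!
Order the intervals of `π` greedily: having placed `h` of them, with right endpoint `s_h`,
place next an interval of length at most the mean `1/k` if `s_h ≥ h/k`, and one of length at
least `1/k` otherwise. Since every length, and the mean, lie in `[0, diam π]`, the invariant
`|s_h - h/k| ≤ diam π` is preserved. The endpoints of the rearranged partitions thus stay within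
`diam π_n → 0` of the uniform grid `h/k`, and uniform continuity of `f` turns the point sums into
Riemann sums of `∫₀¹ f`.
-/

namespace List

variable {α : Type*} {v : α → ℝ} {c d δ : ℝ}

theorem sum_map_take_succ (f : α → ℝ) (L : List α) {i : ℕ} (hi : i < L.length) :
    ((L.take (i + 1)).map f).sum = ((L.take i).map f).sum + f L[i] := by
  rw [map_take, map_take, sum_take_succ _ _ (by simpa using hi), getElem_map]

theorem exists_mem_abs_add_sub_le {L : List α} (hL : L ≠ [])
    (hv : ∀ x ∈ L, 0 ≤ v x ∧ v x ≤ d) (hc : 0 ≤ c) (hcd : c ≤ d) (hδ : |δ| ≤ d)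
    (hsum : δ + (L.map v).sum = L.length * c) :
    ∃ x ∈ L, |δ + v x - c| ≤ d := by
  have hconst : (L.map fun _ => c).sum = L.length * c := by simp
  rw [abs_le] at hδ
  rcases le_total 0 δ with hδ0 | hδ0
  · obtain ⟨x, hx, hxc⟩ := exists_le_of_sum_le hL v (fun _ => c) (by linarith)
    exact ⟨x, hx, abs_le.mpr ⟨by linarith [(hv x hx).1], by linarith⟩⟩
  · obtain ⟨x, hx, hxc⟩ := exists_le_of_sum_le hL (fun _ => c) v (by linarith)
    exact ⟨x, hx, abs_le.mpr ⟨by linarith, by linarith [(hv x hx).2]⟩⟩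

theorem exists_perm_abs_add_sum_take_sub_le (hc : 0 ≤ c) (hcd : c ≤ d) {L : List α}
    (hv : ∀ x ∈ L, 0 ≤ v x ∧ v x ≤ d) (hδ : |δ| ≤ d)
    (hsum : δ + (L.map v).sum = L.length * c) :
    ∃ L', L.Perm L' ∧ ∀ h ≤ L.length, |δ + ((L'.take h).map v).sum - h * c| ≤ d := by
  induction hn : L.length generalizing L δ with
  | zero =>
    refine ⟨L, .refl L, fun h hh => ?_⟩
    simpa [Nat.le_zero.mp hh] using hδ
  | succ m ih =>
    obtain ⟨x, hxL, hx⟩ :=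
      exists_mem_abs_add_sub_le (ne_nil_of_length_eq_add_one hn) hv hc hcd hδ hsum
    obtain ⟨s, t, rfl⟩ := append_of_mem hxL
    have hperm : (s ++ x :: t).Perm (x :: (s ++ t)) := perm_middle
    have hlen : (s ++ t).length = m := by simp only [length_append, length_cons] at hn ⊢; omega
    have hsum' : δ + v x - c + ((s ++ t).map v).sum = (s ++ t).length * c := by
      rw [hn, (hperm.map v).sum_eq, map_cons, sum_cons] at hsum
      rw [hlen]; push_cast at hsum; linarith
    obtain ⟨L', hL', hbound⟩ :=
      ih (fun y hy => hv y (hperm.symm.subset (mem_cons_of_mem x hy))) hx hsum' hlen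
    refine ⟨x :: L', hperm.trans (hL'.cons x), ?_⟩
    rintro (_ | h) hh
    · simpa using hδ
    · convert hbound h (by omega) using 2
      simp only [take_succ_cons, map_cons, sum_cons]
      push_cast
      ring

end List

namespace UnitIntervalPartition

variable (π : UnitIntervalPartition)

theorem length_pos {i : ℕ} (hi : i < π.k) : 0 < π.length i :=
  sub_pos.mpr (π.mono i hi)

theorem length_le_diam {i : ℕ} (hi : i < π.k) : π.length i ≤ π.diam :=
  Finset.le_sup' _ (Finset.mem_range.mpr hi)

theorem t_eq_sum_length (h : ℕ) : π.t h = ∑ i ∈ Finset.range h, π.length i := by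
  simp only [length]
  rw [Finset.sum_range_sub, π.t_zero, sub_zero]

theorem sum_length : ∑ i ∈ Finset.range π.k, π.length i = 1 := by
  rw [← t_eq_sum_length, π.t_last]

theorem t_mem {h : ℕ} (hh : h ≤ π.k) : π.t h ∈ Set.Icc (0 : ℝ) 1 := by
  have hnonneg : ∀ i ∈ Finset.range π.k, 0 ≤ π.length i :=
    fun i hi => (π.length_pos (Finset.mem_range.mp hi)).le
  rw [t_eq_sum_length, ← π.sum_length]
  exact ⟨Finset.sum_nonneg fun i hi => hnonneg i (Finset.range_mono hh hi),
    Finset.sum_le_sum_of_subset_of_nonneg (Finset.range_mono hh) fun i hi _ => hnonneg i hi⟩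

theorem one_div_k_le_diam : 1 / (π.k : ℝ) ≤ π.diam := by
  rw [div_le_iff₀ (Nat.cast_pos.mpr π.k_pos)]
  calc (1 : ℝ) = ∑ i ∈ Finset.range π.k, π.length i := π.sum_length.symm
    _ ≤ ∑ _i ∈ Finset.range π.k, π.diam :=
        Finset.sum_le_sum fun i hi => π.length_le_diam (Finset.mem_range.mp hi)
    _ = π.diam * π.k := by simp [mul_comm]

def rearrange (L : List ℕ) (hL : L.Perm (List.range π.k)) : UnitIntervalPartition where
  k := π.k
  k_pos := π.k_pos
  t h := ((L.take h).map π.length).sum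
  t_zero := by simp
  t_last := by
    rw [List.take_of_length_le (by simp [hL.length_eq])]
    exact (hL.map π.length).sum_eq.trans π.sum_length
  mono i hi := by
    have hiL : i < L.length := by simpa [hL.length_eq] using hi
    rw [List.sum_map_take_succ _ _ hiL, lt_add_iff_pos_right]
    exact π.length_pos (List.mem_range.mp (hL.subset (List.getElem_mem hiL)))

theorem rearrange_length (L : List ℕ) (hL : L.Perm (List.range π.k)) {i : ℕ}
    (hi : i < L.length) :
    (π.rearrange L hL).length i = π.length L[i] := by
  simp only [length, rearrange, List.sum_map_take_succ _ _ hi, add_sub_cancel_left]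

theorem rearrange_isPermutationOf (L : List ℕ) (hL : L.Perm (List.range π.k)) :
    IsPermutationOf (π.rearrange L hL) π := by
  have hlen : L.length = π.k := by simp [hL.length_eq]
  let e : Fin π.k → Fin π.k := fun i =>
    ⟨L[i.1], List.mem_range.mp (hL.subset (List.getElem_mem (i.2.trans_eq hlen.symm)))⟩
  have he : Function.Injective e := fun i j hij =>
    Fin.ext ((hL.nodup_iff.mpr List.nodup_range).getElem_inj_iff.mp (Fin.mk.inj hij))
  exact ⟨rfl, Equiv.ofBijective e (Finite.injective_iff_bijective.mp he),
    fun i => π.rearrange_length L hL (i.2.trans_eq hlen.symm)⟩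

theorem exists_isPermutationOf_abs_t_sub_le :
    ∃ σ : UnitIntervalPartition, IsPermutationOf σ π ∧
      ∀ h ≤ σ.k, |σ.t h - h / σ.k| ≤ π.diam := by
  have hk : (0 : ℝ) < π.k := Nat.cast_pos.mpr π.k_pos
  have hc : (0 : ℝ) ≤ 1 / π.k := by positivity
  obtain ⟨L, hL, hnear⟩ := List.exists_perm_abs_add_sum_take_sub_le (v := π.length)
    (L := List.range π.k) (δ := 0) hc π.one_div_k_le_diam
    (fun i hi => ⟨(π.length_pos (List.mem_range.mp hi)).le,
      π.length_le_diam (List.mem_range.mp hi)⟩)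
    (by simpa using hc.trans π.one_div_k_le_diam)
    (by rw [zero_add, List.length_range, mul_one_div_cancel hk.ne']; exact π.sum_length)
  refine ⟨π.rearrange L hL.symm, π.rearrange_isPermutationOf L hL.symm,
    fun h (hh : h ≤ π.k) => ?_⟩
  simpa [rearrange, div_eq_mul_inv] using hnear h (by simpa using hh)

end UnitIntervalPartition

open Finset in
theorem abs_sum_div_sub_integral_le {f : ℝ → ℝ} (hf : ContinuousOn f (Set.Icc 0 1)) {k : ℕ}
    (hk : 0 < k) (s : ℕ → ℝ) {ε : ℝ}
    (hε : ∀ i < k, ∀ x ∈ Set.Icc ((i : ℝ) / k) ((i + 1 : ℕ) / k),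
      |f x - f (s i)| ≤ ε) :
    |(∑ i ∈ range k, f (s i)) / k - ∫ x in (0 : ℝ)..1, f x| ≤ ε := by
  have hk' : (0 : ℝ) < k := Nat.cast_pos.mpr hk
  set a : ℕ → ℝ := fun i => i / k
  have hgap (i : ℕ) : a (i + 1) - a i = 1 / k := by simp only [a]; push_cast; ring
  have hle (i : ℕ) : a i ≤ a (i + 1) := by linarith [hgap i, one_div_pos.mpr hk']
  have hcell (i : ℕ) (hi : i < k) : Set.uIcc (a i) (a (i + 1)) ⊆ Set.Icc 0 1 := by
    rw [Set.uIcc_of_le (hle i)]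
    refine Set.Icc_subset_Icc (by positivity) ((div_le_one hk').mpr ?_)
    exact_mod_cast hi
  have hint (i : ℕ) (hi : i < k) : IntervalIntegrable f volume (a i) (a (i + 1)) :=
    (hf.mono (hcell i hi)).intervalIntegrable
  have hsplit : ∑ i ∈ range k, ∫ x in a i..a (i + 1), f x = ∫ x in (0 : ℝ)..1, f x := by
    rw [intervalIntegral.sum_integral_adjacent_intervals hint]
    simp [a, hk'.ne']
  have hterm (i : ℕ) (hi : i < k) :
      |f (s i) / k - ∫ x in a i..a (i + 1), f x| ≤ ε / k := by
    have hbound : ∀ x ∈ Set.uIoc (a i) (a (i + 1)), ‖f (s i) - f x‖ ≤ ε := fun x hx => by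
      rw [Real.norm_eq_abs, abs_sub_comm]
      exact hε i hi x (Set.uIcc_of_le (hle i) ▸ Set.uIoc_subset_uIcc hx)
    have h := intervalIntegral.norm_integral_le_of_norm_le_const hbound
    rwa [intervalIntegral.integral_sub intervalIntegrable_const (hint i hi),
      intervalIntegral.integral_const, smul_eq_mul, hgap, abs_of_pos (one_div_pos.mpr hk'),
      Real.norm_eq_abs, one_div_mul_eq_div, mul_one_div] at h
  calc |(∑ i ∈ range k, f (s i)) / k - ∫ x in (0 : ℝ)..1, f x|
      = |∑ i ∈ range k, (f (s i) / k - ∫ x in a i..a (i + 1), f x)| := by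
        rw [← hsplit, sum_div, sum_sub_distrib]
    _ ≤ ∑ _i ∈ range k, ε / k :=
        (abs_sum_le_sum_abs _ _).trans (sum_le_sum fun i hi => hterm i (mem_range.mp hi))
    _ = ε := by rw [sum_const, card_range, nsmul_eq_mul]; field_simp

theorem isUD_of_abs_t_sub_le {σ : ℕ → UnitIntervalPartition} {ε : ℕ → ℝ}
    (hε : Tendsto ε atTop (nhds 0)) (hk : ∀ n, 1 / ((σ n).k : ℝ) ≤ ε n)
    (ht : ∀ n, ∀ h ≤ (σ n).k, |(σ n).t h - h / (σ n).k| ≤ ε n) : IsUD σ := by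
  intro f hf
  rw [Metric.tendsto_atTop]
  intro η hη
  obtain ⟨δ, hδ, hfδ⟩ := Metric.uniformContinuousOn_iff.mp
    (isCompact_Icc.uniformContinuousOn_of_continuous hf) (η / 2) (half_pos hη)
  obtain ⟨N, hN⟩ := eventually_atTop.mp (hε.eventually (gt_mem_nhds (half_pos hδ)))
  refine ⟨N, fun n hn => ?_⟩
  rw [Real.dist_eq]
  refine lt_of_le_of_lt ?_ (half_lt_self hη)
  refine abs_sum_div_sub_integral_le hf (σ n).k_pos _ fun i hi x hx => ?_
  have hk' : (0 : ℝ) < (σ n).k := Nat.cast_pos.mpr (σ n).k_pos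
  have hx01 : x ∈ Set.Icc (0 : ℝ) 1 :=
    ⟨(by positivity : (0 : ℝ) ≤ i / (σ n).k).trans hx.1,
      hx.2.trans ((div_le_one hk').mpr (by exact_mod_cast hi))⟩
  have hx_grid : |x - (i + 1 : ℕ) / (σ n).k| ≤ 1 / (σ n).k := by
    rw [abs_sub_comm, abs_of_nonneg (sub_nonneg.mpr hx.2)]
    have : ((i + 1 : ℕ) : ℝ) / (σ n).k - i / (σ n).k = 1 / (σ n).k := by push_cast; ring
    linarith [hx.1]
  have hdist : dist x ((σ n).t (i + 1)) < δ := by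
    rw [Real.dist_eq]
    calc |x - (σ n).t (i + 1)|
        ≤ |x - (i + 1 : ℕ) / (σ n).k| + |(i + 1 : ℕ) / (σ n).k - (σ n).t (i + 1)| :=
          abs_sub_le _ _ _
      _ ≤ ε n + ε n := by
          rw [abs_sub_comm _ ((σ n).t _)]
          exact add_le_add (hx_grid.trans (hk n)) (ht n (i + 1) hi)
      _ < δ := by linarith [hN n hn]
  rw [← Real.dist_eq]
  exact (hfδ x hx01 _ ((σ n).t_mem hi) hdist).le

/-- **Theorem 2.2.** If `{π_n}` is a dense sequence of partitions, then there exists a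
sequence of partitions `{σ_n}`, with `σ_n` a permutation of `π_n` for every `n`, which is
uniformly distributed. -/
theorem exists_ud_permutation (π : ℕ → UnitIntervalPartition)
    (hdense : Tendsto (fun n => (π n).diam) atTop (nhds 0)) :
    ∃ σ : ℕ → UnitIntervalPartition, (∀ n, IsPermutationOf (σ n) (π n)) ∧ IsUD σ := by
  choose σ hσ hnear using fun n => (π n).exists_isPermutationOf_abs_t_sub_le
  refine ⟨σ, hσ, isUD_of_abs_t_sub_le hdense (fun n => ?_) hnear⟩
  rw [(hσ n).1]
  exact (π n).one_div_k_le_diam
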